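/- arXiv:0704.1385 — 5 statements merged into one kernel-verified Lean document; each statement's English description precedes it below -/
import Mathlib

section
/- Let x, x̃ < 0, y ∈ (x, 0), and set Δϑ = ln(x̃/x). If c ∈ (x̃, 1) satisfies (c - x̃)/(1 - c) = ((y - x)/(1 - y))·(x̃/x), then ln((c - x̃)/(-c)) - ln((y - x)/(-y)) = ln((x̃ - 1)/(x - 1)). -/
/-!
With `s = (t - p) / (1 - t)` one has `t = (p + s) / (1 + s)`, hence
`(t - p) / (-t) = s (1 - p) / (-p - s)`. The hypothesis gives `s_c = s_y · (x̃ / x)` for the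
values of `s` at `(p, t) = (x̃, c)` and `(x, y)`. Substituting, the factor `x̃ / x` cancels
between numerator and denominator, so `(c - x̃) / (-c)` and `(y - x) / (-y)` differ exactly by the
factor `(1 - x̃) / (1 - x)`, and taking logarithms gives the claim.
-/

theorem sub_div_neg_eq (p t : ℝ) (hp : p ≠ 1) (ht0 : t ≠ 0) (ht1 : t ≠ 1) :
    (t - p) / -t = (t - p) / (1 - t) * (1 - p) / (-p - (t - p) / (1 - t)) := by
  have h1t : 1 - t ≠ 0 := sub_ne_zero.mpr ht1.symm
  have hp1 : p - 1 ≠ 0 := sub_ne_zero.mpr hp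
  rw [show -p - (t - p) / (1 - t) = t * (p - 1) / (1 - t) by field_simp; ring]
  field_simp
  ring

theorem sub_div_neg_eq_mul_of_sub_div_one_sub_eq {x xt y c : ℝ} (hx0 : x ≠ 0) (hx1 : x ≠ 1)
    (hxt0 : xt ≠ 0) (hxt1 : xt ≠ 1) (hy0 : y ≠ 0) (hy1 : y ≠ 1) (hc1 : c ≠ 1)
    (hc : (c - xt) / (1 - c) = (y - x) / (1 - y) * (xt / x)) :
    (c - xt) / -c = (y - x) / -y * ((xt - 1) / (x - 1)) := by
  have hx1' : x - 1 ≠ 0 := sub_ne_zero.mpr hx1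
  have hc0 : c ≠ 0 := by
    rintro rfl
    field_simp at hc
    have : xt * y * (x - 1) = 0 := by linear_combination hc
    simp [hxt0, hy0, hx1'] at this
  rw [sub_div_neg_eq xt c hxt1 hc0 hc1, hc, sub_div_neg_eq x y hx1 hy0 hy1]
  generalize (y - x) / (1 - y) = s
  rw [show -xt - s * (xt / x) = xt / x * (-x - s) by field_simp]
  field_simp
  ring

theorem stmt2_general (x xt y c : ℝ) (hx : x < 0) (hxt : xt < 0)
    (hyx : x < y) (hy0 : y < 0) (hc2 : c < 1)
    (hc : (c - xt) / (1 - c) = (y - x) / (1 - y) * (xt / x)) :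
    Real.log ((c - xt) / (-c)) - Real.log ((y - x) / (-y))
      = Real.log ((xt - 1) / (x - 1)) := by
  have hyx_pos : 0 < (y - x) / -y := div_pos (by linarith) (by linarith)
  have hxt_pos : 0 < (xt - 1) / (x - 1) := div_pos_of_neg_of_neg (by linarith) (by linarith)
  rw [sub_div_neg_eq_mul_of_sub_div_one_sub_eq hx.ne (by linarith) hxt.ne (by linarith) hy0.ne
      (by linarith) hc2.ne hc, Real.log_mul hyx_pos.ne' hxt_pos.ne', add_sub_cancel_left]

theorem stmt2 (x xt y c : ℝ) (hx : x < 0) (hxt : xt < 0)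
    (hyx : x < y) (hy0 : y < 0) (hc1 : xt < c) (hc2 : c < 1)
    (hc : (c - xt) / (1 - c) = (y - x) / (1 - y) * (xt / x)) :
    Real.log ((c - xt) / (-c)) - Real.log ((y - x) / (-y))
      = Real.log ((xt - 1) / (x - 1)) :=
  stmt2_general x xt y c hx hxt hyx hy0 hc2 hc
end

section
/- Let x, x̃ ∈ (-1, 0), y ∈ (x, -x), Δθ = ln((x̃/(−1−x̃))·((−1−x)/x)), and Δt = ln(((x̃−1)/(−1−x̃))·((−1−x)/(x−1))). If c ∈ (x̃, 1) satisfies (c − x̃)/(1 − c) = ((y − x)/(1 − y))·(x̃/(1+x̃))·((1+x)/x), then ln((c − x̃)/(−x̃ − c)) − ln((y − x)/(−x − y)) = Δt. -/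
/-!
Writing `r_{a,b}(t) = (t - a) / (b - t)`, the hypothesis says that `c = M y` for the Möbius map
`M` with `M x = xt`, `M 1 = 1` and `r_{xt,1} ∘ M = μ · r_{x,1}`, where `μ = exp Δθ`. One checks
`M (-x) = -xt`, and a Möbius map preserves cross-ratios, so `r_{xt,-xt}(c) / r_{x,-x}(y)` is the
constant `[(1 - xt)/(1 + xt)] / [(1 - x)/(1 + x)]`, whose logarithm is `Δt`.
-/

theorem sub_div_sub_eq_mobius {a b t : ℝ} (d : ℝ) (hab : a ≠ b) (htb : t ≠ b) :
    (t - a) / (d - t) =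
      (b - a) * ((t - a) / (b - t)) / ((d - a) + (d - b) * ((t - a) / (b - t))) := by
  have hbt : b - t ≠ 0 := sub_ne_zero.mpr htb.symm
  have hba : b - a ≠ 0 := sub_ne_zero.mpr hab.symm
  have hden : (d - a) + (d - b) * ((t - a) / (b - t)) = (b - a) * (d - t) / (b - t) := by
    field_simp; ring
  rw [hden, mul_div_assoc', div_div_div_cancel_right₀ hbt, mul_div_mul_left _ _ hba]

theorem sub_div_sub_eq_mul_of_mobius {a b d a' b' d' y c μ : ℝ}
    (hab : a ≠ b) (hbd : b ≠ d) (hyb : y ≠ b) (ha'b' : a' ≠ b') (hb'd' : b' ≠ d') (hcb' : c ≠ b')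
    (hμ : μ ≠ 0)
    (hc : (c - a') / (b' - c) = (y - a) / (b - y) * μ)
    (hd : (d' - a') / (b' - d') = (d - a) / (b - d) * μ) :
    (c - a') / (d' - c) = (b' - a') / (b' - d') / ((b - a) / (b - d)) * ((y - a) / (d - y)) := by
  rw [sub_div_sub_eq_mobius d' ha'b' hcb', hc, sub_div_sub_eq_mobius d hab hyb]
  set r := (y - a) / (b - y)
  have hb'd'0 : b' - d' ≠ 0 := sub_ne_zero.mpr hb'd'
  have hbd0 : b - d ≠ 0 := sub_ne_zero.mpr hbd
  have hden :
      (d' - a') + (d' - b') * (r * μ) = μ * (b' - d') / (b - d) * ((d - a) + (d - b) * r) := by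
    rw [(div_eq_iff hb'd'0).mp hd]
    field_simp
    ring
  rw [hden, ← div_div, mul_div_assoc']
  field_simp

theorem stmt3_general (x xt y c : ℝ)
    (hx1 : -1 < x) (hx0 : x < 0) (hxt1 : -1 < xt) (hxt0 : xt < 0)
    (hyx : x < y) (hy : y < -x) (hc2 : c < 1)
    (hc : (c - xt) / (1 - c) = (y - x) / (1 - y) * (xt / (1 + xt)) * ((1 + x) / x)) :
    Real.log ((c - xt) / (-xt - c)) - Real.log ((y - x) / (-x - y))
      = Real.log ((xt - 1) / (-1 - xt) * ((-1 - x) / (x - 1))) := by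
  have hx : x ≠ 0 := hx0.ne
  have h1x : 1 + x ≠ 0 := by linarith
  have h1xt : 1 + xt ≠ 0 := by linarith
  have hμ : xt / (1 + xt) * ((1 + x) / x) ≠ 0 :=
    mul_ne_zero (div_ne_zero hxt0.ne h1xt) (div_ne_zero h1x hx)
  have hmaps : (-xt - xt) / (1 - -xt) = (-x - x) / (1 - -x) * (xt / (1 + xt) * ((1 + x) / x)) := by
    rw [show (1 : ℝ) - -xt = 1 + xt by ring, show (1 : ℝ) - -x = 1 + x by ring]
    field_simp
  have hcross := sub_div_sub_eq_mul_of_mobius (a := x) (b := 1) (d := -x) (a' := xt) (b' := 1)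
    (d' := -xt) (y := y) (c := c) (by linarith) (by linarith)
    (by linarith) (by linarith) (by linarith) hc2.ne hμ
    (by rw [hc, mul_assoc]) hmaps
  have hκ : (1 - xt) / (1 - -xt) / ((1 - x) / (1 - -x)) ≠ 0 :=
    div_ne_zero (div_ne_zero (by linarith) (by linarith)) (div_ne_zero (by linarith) (by linarith))
  have hr : (y - x) / (-x - y) ≠ 0 := div_ne_zero (by linarith) (by linarith)
  rw [hcross, Real.log_mul hκ hr, add_sub_cancel_right]
  congr 1
  field_simp
  ring

theorem stmt3 (x xt y c : ℝ)
    (hx1 : -1 < x) (hx0 : x < 0) (hxt1 : -1 < xt) (hxt0 : xt < 0)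
    (hyx : x < y) (hy : y < -x) (hc1 : xt < c) (hc2 : c < 1)
    (hc : (c - xt) / (1 - c) = (y - x) / (1 - y) * (xt / (1 + xt)) * ((1 + x) / x)) :
    Real.log ((c - xt) / (-xt - c)) - Real.log ((y - x) / (-x - y))
      = Real.log ((xt - 1) / (-1 - xt) * ((-1 - x) / (x - 1))) :=
  stmt3_general x xt y c hx1 hx0 hxt1 hxt0 hyx hy hc2 hc
end

section
/- Let 0 ≤ z < y < ỹ < −x̃ < 1 with x̃ ∈ (−1, 0). Define c by the condition (c − ỹ)/(x̃ − c) = ((z − y)/(x̃ − z))·(ỹ/(−x̃ − ỹ))·((−x̃ − y)/y)·((1 − ỹ)/(1 − y)). Then (c − ỹ)/(−ỹ − c) > (z − y)/(−y − z); that is, p_{ỹ,−ỹ}(c) > p_{y,−y}(z), with strict inequality (even for z = 0). -/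
/-!
Write `R` for the right-hand side of the defining equation, so that `c - ỹ = R (x̃ - c)`, i.e.
`c = (ỹ + R x̃) / (1 + R)`. Since `t ↦ (ỹ - t) / (ỹ + t)` is decreasing on `t > -ỹ` and
`(y - z) / (y + z)` is its value at `t = z ỹ / y`, it suffices to show `-ỹ < c < z ỹ / y`.
Both bounds reduce to bounds on `R`: `R (-x̃ - ỹ) < ỹ` and `ỹ (y - z) < R (z ỹ - x̃ y)`, and after
clearing denominators each of these is a product of two elementary inequalities between the points.
-/

lemma neg_div_lt_neg_div_of_mul_lt {y z u c : ℝ} (hyz : 0 < y + z) (huc : 0 < u + c)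
    (h : c * y < z * u) : (z - y) / (-y - z) < (c - u) / (-u - c) := by
  rw [← neg_div_neg_eq (z - y), ← neg_div_neg_eq (c - u),
    div_lt_div_iff₀ (by linarith) (by linarith)]
  nlinarith

lemma sub_eq_mul_sub_of_div_eq {c u x R : ℝ} (hR : R ≠ 0) (h : (c - u) / (x - c) = R) :
    c - u = R * (x - c) := by
  have hxc : x - c ≠ 0 := by
    rintro hxc
    rw [hxc, div_zero] at h
    exact hR h.symm
  rwa [div_eq_iff hxc] at h

/-- `exp` of the right-hand side of the defining equation of `c` in Poincaré coordinates,
with `x = x̃` and `u = ỹ`. -/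
noncomputable def definingRatio (x y u z : ℝ) : ℝ :=
  (z - y) / (x - z) * (u / (-x - u)) * ((-x - y) / y) * ((1 - u) / (1 - y))

section

variable {x y u z : ℝ}

lemma definingRatio_pos (hz : 0 ≤ z) (hzy : z < y) (hyu : y < u) (hux : u < -x) (hu1 : u < 1) :
    0 < definingRatio x y u z := by
  have hy : 0 < y := hz.trans_lt hzy
  unfold definingRatio
  have : 0 < (z - y) / (x - z) := div_pos_of_neg_of_neg (by linarith) (by linarith)
  have : 0 < u / (-x - u) := div_pos (by linarith) (by linarith)
  have : 0 < (-x - y) / y := div_pos (by linarith) hy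
  have : 0 < (1 - u) / (1 - y) := div_pos (by linarith) (by linarith)
  positivity

lemma definingRatio_mul_lt (hz : 0 ≤ z) (hzy : z < y) (hyu : y < u) (hux : u < -x) (hu1 : u < 1) :
    definingRatio x y u z * (-x - u) < u := by
  have hy : 0 < y := hz.trans_lt hzy
  have hD : 0 < (z - x) * y * (1 - y) := by
    have : 0 < z - x := by linarith
    have : 0 < 1 - y := by linarith
    positivity
  have hkey : (y - z) * (-x - y) * (1 - u) < (z - x) * y * (1 - y) := by
    have h1 : (y - z) * (-x - y) ≤ (z - x) * y := by nlinarith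
    have h2 : 1 - u < 1 - y := by linarith
    exact mul_lt_mul' h1 h2 (by linarith) (by nlinarith)
  have hrw : definingRatio x y u z * (-x - u) =
      u * ((y - z) * (-x - y) * (1 - u) / ((z - x) * y * (1 - y))) := by
    unfold definingRatio
    field_simp [show x - z ≠ 0 by linarith, show z - x ≠ 0 by linarith, hy.ne',
      show -x - u ≠ 0 by linarith, show 1 - y ≠ 0 by linarith]
    ring
  rw [hrw]
  exact mul_lt_of_lt_one_right (by linarith) ((div_lt_one hD).2 hkey)

lemma lt_definingRatio_mul (hx1 : -1 < x) (hz : 0 ≤ z) (hzy : z < y) (hyu : y < u) (hux : u < -x) :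
    u * (y - z) < definingRatio x y u z * (z * u - x * y) := by
  have hy : 0 < y := hz.trans_lt hzy
  have hD : 0 < (z - x) * (-x - u) * y * (1 - y) := by
    have : 0 < z - x := by linarith
    have : 0 < -x - u := by linarith
    have : 0 < 1 - y := by linarith
    positivity
  have hkey : (z - x) * y * ((-x - u) * (1 - y)) < (z * u - x * y) * ((-x - y) * (1 - u)) := by
    have h1 : (z - x) * y ≤ z * u - x * y := by nlinarith
    have h2 : (-x - u) * (1 - y) < (-x - y) * (1 - u) := by nlinarith
    exact mul_lt_mul' h1 h2 (by nlinarith) (by nlinarith)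
  have hrw : definingRatio x y u z * (z * u - x * y) = u * (y - z) *
      ((z * u - x * y) * ((-x - y) * (1 - u)) / ((z - x) * (-x - u) * y * (1 - y))) := by
    unfold definingRatio
    field_simp [show x - z ≠ 0 by linarith, show z - x ≠ 0 by linarith, hy.ne',
      show -x - u ≠ 0 by linarith, show 1 - y ≠ 0 by linarith]
    ring
  rw [hrw]
  exact lt_mul_of_one_lt_right (by nlinarith) ((one_lt_div hD).2 (by linarith))

end

theorem stmt8_general (xt y yt z c : ℝ)
    (hxt1 : -1 < xt) (hz0 : 0 ≤ z) (hzy : z < y) (hyyt : y < yt) (hytx : yt < -xt)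
    (hc : (c - yt) / (xt - c)
        = (z - y) / (xt - z) * (yt / (-xt - yt)) * ((-xt - y) / y) * ((1 - yt) / (1 - y))) :
    (c - yt) / (-yt - c) > (z - y) / (-y - z) := by
  set R := definingRatio xt y yt z
  have hyt1 : yt < 1 := by linarith
  have hR : 0 < R := definingRatio_pos hz0 hzy hyyt hytx hyt1
  have hcR := sub_eq_mul_sub_of_div_eq hR.ne' hc
  have hlower : 0 < yt + c := by
    have h : (yt + c) * (1 + R) = 2 * yt - R * (-xt - yt) := by linear_combination hcR
    refine pos_of_mul_pos_left ?_ (by linarith : (0 : ℝ) ≤ 1 + R)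
    linarith [definingRatio_mul_lt hz0 hzy hyyt hytx hyt1]
  have hupper : c * y < z * yt := by
    have h : (z * yt - c * y) * (1 + R) = R * (z * yt - xt * y) - yt * (y - z) := by
      linear_combination (-y) * hcR
    have : 0 < z * yt - c * y := by
      refine pos_of_mul_pos_left ?_ (by linarith : (0 : ℝ) ≤ 1 + R)
      linarith [lt_definingRatio_mul hxt1 hz0 hzy hyyt hytx]
    linarith
  exact neg_div_lt_neg_div_of_mul_lt (by linarith) hlower hupper

theorem stmt8 (xt y yt z c : ℝ)
    (hxt1 : -1 < xt) (hxt0 : xt < 0)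
    (hz0 : 0 ≤ z) (hzy : z < y) (hyyt : y < yt) (hytx : yt < -xt)
    (hc : (c - yt) / (xt - c)
        = (z - y) / (xt - z) * (yt / (-xt - yt)) * ((-xt - y) / y) * ((1 - yt) / (1 - y))) :
    (c - yt) / (-yt - c) > (z - y) / (-y - z) :=
  stmt8_general xt y yt z c hxt1 hz0 hzy hyyt hytx hc
end

section
/- Let α > 1 and h(x) = x^α. For p, q, x with 0 < p < x < q, define the Poincaré coordinate p_{p,q}(x) = ln((x−p)/(q−x)) and the conjugated map h̄_{p,q}(t) = p_{h(p),h(q)}(h(p_{p,q}^{-1}(t))). Then h̄_{p,q} is strictly increasing in t, and for any two points x < x' in (p,q), h̄_{p,q}(p_{p,q}(x')) − h̄_{p,q}(p_{p,q}(x)) > p_{p,q}(x') − p_{p,q}(x); i.e., h expands the Poincaré metric of any subinterval of (0,∞). -/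
/-!
In logarithmic coordinates `y = exp s` one has `y ^ t = exp (t * s)` and
`exp b - exp a = 2 exp ((a + b) / 2) sinh ((b - a) / 2)`, so the increment of the Poincaré
coordinate of `(p ^ t, q ^ t)` between `x ^ t` and `x' ^ t` is a sum of two terms
`log sinh (t U) - log sinh (t V)` with `U > V > 0`. The `t`-derivative of such a term is
`(g (t U) - g (t V)) / t` with `g s = s coth s`, which is increasing because `s < sinh s cosh s`.
Hence the increment grows strictly from `t = 1` to `t = α`.
-/

/-- Poincaré coordinate of `x` in the oriented interval `(p,q)`. -/
noncomputable def pc (p q x : ℝ) : ℝ := Real.log ((x - p) / (q - x))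

open Real Set

lemma Real.self_lt_sinh_mul_cosh {s : ℝ} (hs : 0 < s) : s < sinh s * cosh s := by
  have h := self_lt_sinh_iff.mpr (mul_pos two_pos hs)
  rw [sinh_two_mul] at h
  linarith

lemma Real.strictMonoOn_mul_cosh_div_sinh :
    StrictMonoOn (fun s => s * cosh s / sinh s) (Ioi 0) := by
  refine strictMonoOn_of_deriv_pos (convex_Ioi 0) ?_ fun s hs => ?_
  · exact ContinuousOn.div (by fun_prop) (by fun_prop) fun s hs => (sinh_pos_iff.mpr hs).ne'
  rw [interior_Ioi] at hs
  have hsinh := sinh_pos_iff.mpr hs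
  have hd : HasDerivAt (fun s => s * cosh s / sinh s) _ s :=
    ((hasDerivAt_id' s).mul (hasDerivAt_cosh s)).div (hasDerivAt_sinh s) hsinh.ne'
  rw [hd.deriv, Pi.mul_apply]
  have hnum : (1 * cosh s + s * sinh s) * sinh s - s * cosh s * cosh s = sinh s * cosh s - s := by
    linear_combination (-s) * cosh_sq_sub_sinh_sq s
  rw [hnum]
  exact div_pos (sub_pos.mpr (self_lt_sinh_mul_cosh hs)) (by positivity)

lemma Real.strictMonoOn_log_sinh_mul_sub_log_sinh_mul {U V : ℝ} (hV : 0 < V) (hVU : V < U) :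
    StrictMonoOn (fun t => log (sinh (t * U)) - log (sinh (t * V))) (Ioi 0) := by
  have hU := hV.trans hVU
  refine strictMonoOn_of_deriv_pos (convex_Ioi 0) ?_ fun t ht => ?_
  · refine ContinuousOn.sub ?_ ?_ <;> refine ContinuousOn.log (by fun_prop) fun t ht => ?_
    · exact (sinh_pos_iff.mpr (mul_pos ht hU)).ne'
    · exact (sinh_pos_iff.mpr (mul_pos ht hV)).ne'
  rw [interior_Ioi] at ht
  have hsU := sinh_pos_iff.mpr (mul_pos ht hU)
  have hsV := sinh_pos_iff.mpr (mul_pos ht hV)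
  have hd : HasDerivAt (fun t => log (sinh (t * U)) - log (sinh (t * V))) _ t :=
    (((hasDerivAt_id' t).mul_const U).sinh.log hsU.ne').sub
      (((hasDerivAt_id' t).mul_const V).sinh.log hsV.ne')
  rw [hd.deriv]
  -- `t` times the derivative is the increment of `s ↦ s coth s` from `t * V` to `t * U`.
  have := strictMonoOn_mul_cosh_div_sinh (mul_pos ht hV) (mul_pos ht hU) (by gcongr)
  refine pos_of_mul_pos_right ?_ (le_of_lt ht)
  convert sub_pos.mpr this using 1
  ring

lemma Real.exp_sub_exp_eq_mul_sinh (a b : ℝ) :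
    exp b - exp a = 2 * exp ((a + b) / 2) * sinh ((b - a) / 2) := by
  have hb : exp b = exp ((a + b) / 2) * exp ((b - a) / 2) := by rw [← exp_add]; ring_nf
  have ha : exp a = exp ((a + b) / 2) * exp (-((b - a) / 2)) := by rw [← exp_add]; ring_nf
  rw [sinh_eq]
  linear_combination hb - ha

lemma Real.log_exp_sub_exp {a b : ℝ} (hab : a < b) :
    log (exp b - exp a) = log 2 + (a + b) / 2 + log (sinh ((b - a) / 2)) := by
  have hs := sinh_pos_iff.mpr (half_pos (sub_pos.mpr hab))
  rw [exp_sub_exp_eq_mul_sinh, log_mul (by positivity) hs.ne', log_mul two_ne_zero (exp_pos _).ne',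
    log_exp]

lemma pc_exp {a b c : ℝ} (hac : a < c) (hcb : c < b) :
    pc (exp a) (exp b) (exp c)
      = (a - b) / 2 + log (sinh ((c - a) / 2)) - log (sinh ((b - c) / 2)) := by
  have h1 := sub_pos.mpr (exp_lt_exp.mpr hac)
  have h2 := sub_pos.mpr (exp_lt_exp.mpr hcb)
  rw [pc, log_div h1.ne' h2.ne', log_exp_sub_exp hac, log_exp_sub_exp hcb]
  ring

lemma strictMonoOn_pc_exp_mul_sub_pc_exp_mul {a b c c' : ℝ} (hac : a < c) (hcc' : c < c')
    (hc'b : c' < b) :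
    StrictMonoOn (fun t => pc (exp (t * a)) (exp (t * b)) (exp (t * c'))
      - pc (exp (t * a)) (exp (t * b)) (exp (t * c))) (Ioi 0) := by
  refine ((strictMonoOn_log_sinh_mul_sub_log_sinh_mul (U := (c' - a) / 2) (V := (c - a) / 2)
    (by linarith) (by linarith)).add (strictMonoOn_log_sinh_mul_sub_log_sinh_mul
    (U := (b - c) / 2) (V := (b - c') / 2) (by linarith) (by linarith))).congr fun t ht => ?_
  have ht : 0 < t := ht
  have hac' := hac.trans hcc'
  have hcb := hcc'.trans hc'b
  beta_reduce
  rw [pc_exp (by gcongr) (by gcongr), pc_exp (by gcongr) (by gcongr)]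
  simp only [← mul_sub, mul_div_assoc]
  ring

theorem stmt13 (α p q x x' : ℝ) (hα : 1 < α)
    (hp : 0 < p) (hpx : p < x) (hxx' : x < x') (hq : x' < q) :
    pc (p ^ α) (q ^ α) (x' ^ α) - pc (p ^ α) (q ^ α) (x ^ α)
      > pc p q x' - pc p q x := by
  have hx := hp.trans hpx
  have hx' := hx.trans hxx'
  have hmono := strictMonoOn_pc_exp_mul_sub_pc_exp_mul (log_lt_log hp hpx) (log_lt_log hx hxx')
    (log_lt_log hx' hq) (mem_Ioi.mpr one_pos) (mem_Ioi.mpr (one_pos.trans hα)) hα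
  have hexp : ∀ y, 0 < y → exp (α * log y) = y ^ α := fun y hy => by
    rw [rpow_def_of_pos hy, mul_comm]
  simpa only [one_mul, exp_log hp, exp_log hx, exp_log hx', exp_log (hx'.trans hq), hexp p hp,
    hexp x hx, hexp x' hx', hexp q (hx'.trans hq)] using hmono
end

section
/- Let α > 1 and f_a(x) = −|x|^α + a with a > 1. After rescaling so that the critical value is 1 (i.e. normalizing n_a ↦ n_a/a), for parameters with 2_a := f_a²(0)/a ∈ (−1,0) and 3_a := f_a³(0)/a (rescaled) ∈ (0,1) and 4_a ∈ (2_a, −2_a), the function g(t) = p_{2_a,−2_a}(4_a), viewed as a function of t = p_{1,−1}(2_a), is strictly increasing with g'(t) > 1. In particular the value g(t) = 0 (the super-stable orbit with kneading sequence RLRC) is attained for exactly one parameter. -/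
/-- The quasi-quadratic power-law map `x ↦ -|x|^α + a`. -/
noncomputable def f (α a : ℝ) : ℝ → ℝ := fun x => -|x| ^ α + a

/-- The `n`-th point of the post-critical orbit, rescaled so that `1_a = 1`. -/
noncomputable def orb (α a : ℝ) (n : ℕ) : ℝ := (f α a)^[n] 0 / a

/-- Admissible parameters: `a > 1`, rescaled `2_a ∈ (-1,0)`, `3_a ∈ (0,1)` and
`4_a ∈ (2_a, -2_a)`. -/
def Adm (α a : ℝ) : Prop :=
  1 < a ∧ orb α a 2 ∈ Set.Ioo (-1 : ℝ) 0 ∧ orb α a 3 ∈ Set.Ioo (0 : ℝ) 1 ∧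
    orb α a 4 ∈ Set.Ioo (orb α a 2) (-(orb α a 2))

/-- The parameter coordinate `t = p_{1,-1}(2_a)`. -/
noncomputable def tcoord (α a : ℝ) : ℝ := pc 1 (-1) (orb α a 2)

/-- The function `g(t) = p_{2_a,-2_a}(4_a)`. -/
noncomputable def g (α a : ℝ) : ℝ := pc (orb α a 2) (-(orb α a 2)) (orb α a 4)

open Real Set Filter Topology

lemma hasDerivAt_pc {p q x : ℝ → ℝ} {p' q' x' u : ℝ} (hp : HasDerivAt p p' u)
    (hq : HasDerivAt q q' u) (hx : HasDerivAt x x' u) (hpx : x u ≠ p u) (hxq : q u ≠ x u) :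
    HasDerivAt (fun y => pc (p y) (q y) (x y))
      ((x' - p') / (x u - p u) - (q' - x') / (q u - x u)) u := by
  have hA : x u - p u ≠ 0 := sub_ne_zero.2 hpx
  have hB : q u - x u ≠ 0 := sub_ne_zero.2 hxq
  refine (((hx.sub hp).div (hq.sub hx) hB).log (div_ne_zero hA hB)).congr_deriv ?_
  simp only [Pi.sub_apply, Pi.div_apply]
  field_simp

lemma HasDerivAt.eventually_nhdsGT_lt {f : ℝ → ℝ} {f' y : ℝ} (hf : HasDerivAt f f' y)
    (hf' : f' < 0) : ∀ᶠ z in 𝓝[>] y, f z < f y := by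
  filter_upwards [hf.hasDerivWithinAt.limsup_slope_le' (lt_irrefl y) hf', self_mem_nhdsWithin]
    with z hz hyz
  exact (slope_neg_iff_of_le (le_of_lt hyz)).1 hz

lemma lt_of_lt_of_downward_crossings {φ : ℝ → ℝ} {k x b : ℝ} (hxb : x ≤ b)
    (hφ : ContinuousOn φ (Icc x b)) (hdown : ∀ y ∈ Ico x b, φ y = k → ∀ᶠ z in 𝓝[>] y, φ z < k)
    (hb : k < φ b) : k < φ x := by
  by_contra! hx
  set S := Icc x b ∩ φ ⁻¹' {k}
  have hS : IsCompact S := isCompact_Icc.of_isClosed_subset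
    (hφ.preimage_isClosed_of_isClosed isClosed_Icc isClosed_singleton) inter_subset_left
  obtain ⟨y, hyI, hy⟩ := intermediate_value_Icc hxb hφ ⟨hx, hb.le⟩
  obtain ⟨c, ⟨hcI, hc⟩, hcmax⟩ := hS.exists_isGreatest ⟨y, hyI, hy⟩
  have hcb : c < b := lt_of_le_of_ne hcI.2 (by rintro rfl; exact hb.ne' hc)
  obtain ⟨z, hz, hcz, hzb⟩ :=
    ((hdown c ⟨hcI.1, hcb⟩ hc).and (Ioo_mem_nhdsGT hcb)).exists
  obtain ⟨y', hy'I, hy'⟩ := intermediate_value_Icc hzb.le (hφ.mono (Icc_subset_Icc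
    (hcI.1.trans hcz.le) le_rfl)) ⟨hz.le, hb.le⟩
  have : y' ≤ c := hcmax ⟨Icc_subset_Icc (hcI.1.trans hcz.le) le_rfl hy'I, hy'⟩
  linarith [hy'I.1]

noncomputable def v3 (α u : ℝ) : ℝ := (1 + u) * u ^ α

noncomputable def w4 (α u : ℝ) : ℝ := (1 + u) * (1 - v3 α u) ^ α

noncomputable def dv3 (α u : ℝ) : ℝ := u ^ α + α * (1 + u) * u ^ (α - 1)

noncomputable def dw4 (α u : ℝ) : ℝ :=
  (1 - v3 α u) ^ α - α * (1 + u) * (1 - v3 α u) ^ (α - 1) * dv3 α u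

noncomputable def tU (u : ℝ) : ℝ := pc 1 (-1) (-u)

noncomputable def gU (α u : ℝ) : ℝ := pc (-u) u (1 - w4 α u)

noncomputable def dgU (α u : ℝ) : ℝ :=
  (1 - dw4 α u) / (1 + u - w4 α u) - (1 + dw4 α u) / (w4 α u - (1 - u))

def AdmU (α u : ℝ) : Prop := 0 < u ∧ u < 1 ∧ v3 α u < 1 ∧ 1 - u < w4 α u

section Orbit

variable {α u : ℝ}

lemma hasDerivAt_v3 (hα : 1 ≤ α) (u : ℝ) : HasDerivAt (v3 α) (dv3 α u) u :=
  (((hasDerivAt_id u).const_add 1).mul (hasDerivAt_rpow_const (Or.inr hα))).congr_deriv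
    (by simp only [dv3, id]; ring)

lemma hasDerivAt_w4 (hα : 1 ≤ α) (u : ℝ) : HasDerivAt (w4 α) (dw4 α u) u :=
  (((hasDerivAt_id u).const_add 1).mul
    (((hasDerivAt_v3 hα u).const_sub 1).rpow_const (Or.inr hα))).congr_deriv
    (by simp only [dw4, id]; ring)

lemma continuous_v3 (hα : 1 ≤ α) : Continuous (v3 α) :=
  continuous_iff_continuousAt.2 fun u => (hasDerivAt_v3 hα u).continuousAt

lemma continuous_w4 (hα : 1 ≤ α) : Continuous (w4 α) :=
  continuous_iff_continuousAt.2 fun u => (hasDerivAt_w4 hα u).continuousAt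

lemma v3_pos (hu : 0 < u) : 0 < v3 α u := by unfold v3; positivity

lemma v3_strictMonoOn (hα : 0 < α) : StrictMonoOn (v3 α) (Ici 0) := by
  intro x (hx : 0 ≤ x) y _ hxy
  have := rpow_lt_rpow hx hxy hα
  have := rpow_nonneg hx α
  unfold v3
  nlinarith

lemma w4_lt (hα : 0 < α) (hu : 0 < u) (hv : v3 α u < 1) : w4 α u < 1 + u := by
  have : (1 - v3 α u) ^ α < 1 := rpow_lt_one (by linarith) (by linarith [v3_pos (α := α) hu]) hα
  unfold w4
  nlinarith

lemma rpow_eq_rpow_sub_one_mul {x : ℝ} (hx : 0 < x) (α : ℝ) : x ^ α = x ^ (α - 1) * x := by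
  rw [← rpow_add_one hx.ne', sub_add_cancel]

lemma one_sub_mul_lt_one_sub_rpow {x : ℝ} (hα : 1 < α) (hx0 : 0 < x) (hx1 : x ≤ 1) :
    1 - α * x < (1 - x) ^ α := by
  simpa [sub_eq_add_neg] using
    one_add_mul_self_lt_rpow_one_add (s := -x) (by linarith) (by linarith) hα

lemma v3_mul_one_sub_v3_lt (hα : 1 < α) (hu0 : 0 < u) (hu1 : u < 1) :
    v3 α u * (1 - v3 α u) < u * (1 - u) * dv3 α u := by
  have hber := one_sub_mul_lt_one_sub_rpow hα (sub_pos.2 hu1) (by linarith)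
  rw [sub_sub_cancel] at hber
  have hU : 0 < u ^ (α - 1) := rpow_pos_of_pos hu0 _
  have hUu := rpow_eq_rpow_sub_one_mul hu0 α
  have hK : (1 + u) * (1 - v3 α u) < (1 - u) * (u + α * (1 + u)) := by
    unfold v3
    rcases le_or_gt (α * (1 - u ^ 2)) 2 with h | h <;> nlinarith
  have hv : v3 α u = u ^ (α - 1) * u * (1 + u) := by rw [v3, hUu]; ring
  have hdv : dv3 α u = u ^ (α - 1) * (u + α * (1 + u)) := by rw [dv3, hUu]; ring
  calc v3 α u * (1 - v3 α u) = u ^ (α - 1) * u * ((1 + u) * (1 - v3 α u)) := by rw [hv]; ring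
    _ < u ^ (α - 1) * u * ((1 - u) * (u + α * (1 + u))) := mul_lt_mul_of_pos_left hK (by positivity)
    _ = u * (1 - u) * dv3 α u := by rw [hdv]; ring

lemma dw4_lt_neg_one (hα : 1 < α) (hu0 : 0 < u) (hu1 : u < 1) (hv : v3 α u < 1)
    (hw : w4 α u = 1 - u) : dw4 α u < -1 := by
  have hK := v3_mul_one_sub_v3_lt hα hu0 hu1
  set v := v3 α u
  set X := α * (1 + u) ^ 2 * (1 - v) ^ (α - 1) * dv3 α u
  have hP := rpow_eq_rpow_sub_one_mul (sub_pos.2 hv) α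
  have hP' : 0 < (1 - v) ^ (α - 1) := rpow_pos_of_pos (sub_pos.2 hv) _
  have hber := one_sub_mul_lt_one_sub_rpow hα (v3_pos hu0) hv.le
  have hw' : (1 + u) * ((1 - v) ^ (α - 1) * (1 - v)) = 1 - u := by rw [← hP]; exact hw
  have hαv : 2 * u < α * v * (1 + u) := by
    have : (1 + u) * (1 - v) ^ α = 1 - u := hw
    nlinarith [mul_lt_mul_of_pos_left hber (by linarith : (0 : ℝ) < 1 + u)]
  have hX : 2 < X := by
    have h : α * (1 + u) * v * (1 - u) < X * (u * (1 - u)) := by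
      calc α * (1 + u) * v * (1 - u) = α * (1 + u) ^ 2 * (1 - v) ^ (α - 1) * (v * (1 - v)) := by
            rw [← hw']; ring
        _ < α * (1 + u) ^ 2 * (1 - v) ^ (α - 1) * (u * (1 - u) * dv3 α u) :=
            mul_lt_mul_of_pos_left hK (by positivity)
        _ = X * (u * (1 - u)) := by ring
    have : α * (1 + u) * v < X * u := by nlinarith
    nlinarith
  have hdw : (1 + u) * dw4 α u = 1 - u - X := by
    rw [dw4, hP, ← hw']; ring
  nlinarith

lemma deriv_tU_lt_deriv_gU (hα : 1 < α) (hu0 : 0 < u) (hu1 : u < 1) (hv : v3 α u < 1)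
    (hw : 1 - u < w4 α u) :
    1 / (1 + u) + 1 / (1 - u) < dgU α u := by
  have hK := v3_mul_one_sub_v3_lt hα hu0 hu1
  have hA : 0 < 1 + u - w4 α u := sub_pos.2 (w4_lt (by linarith) hu0 hv)
  have hB : 0 < w4 α u - (1 - u) := sub_pos.2 hw
  set v := v3 α u
  have hP := rpow_eq_rpow_sub_one_mul (sub_pos.2 hv) α
  have hP' : 0 < (1 - v) ^ (α - 1) := rpow_pos_of_pos (sub_pos.2 hv) _
  have hber := one_sub_mul_lt_one_sub_rpow hα (v3_pos hu0) hv.le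
  set P := (1 - v) ^ α
  have key : P * (1 - P) < α * u * (1 - u) * (1 - v) ^ (α - 1) * dv3 α u :=
    calc P * (1 - P) < P * (α * v) := mul_lt_mul_of_pos_left (by linarith) (by positivity)
      _ = α * (1 - v) ^ (α - 1) * (v * (1 - v)) := by rw [hP]; ring
      _ < α * (1 - v) ^ (α - 1) * (u * (1 - u) * dv3 α u) :=
          mul_lt_mul_of_pos_left hK (by positivity)
      _ = _ := by ring
  have hdiff : dgU α u - (1 / (1 + u) + 1 / (1 - u)) = 2 * (1 + u) ^ 2 *
        (α * u * (1 - u) * (1 - v) ^ (α - 1) * dv3 α u - P * (1 - P)) /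
        ((1 + u - w4 α u) * (w4 α u - (1 - u)) * ((1 + u) * (1 - u))) := by
    have h1 : (1 + u) ≠ 0 := by linarith
    have h2 : (1 - u) ≠ 0 := by linarith
    rw [dgU, div_add_div _ _ h1 h2, div_sub_div _ _ hA.ne' hB.ne',
      div_sub_div _ _ (by positivity) (by positivity),
      div_eq_div_iff (by positivity) (by positivity)]
    simp only [dw4, w4]
    ring
  have : 0 < 1 - u := by linarith
  have := sub_pos.2 key
  rw [← sub_pos, hdiff]
  positivity

lemma hasDerivAt_tU (hu : u ∈ Ioo (-1) 1) : HasDerivAt tU (1 / (1 + u) + 1 / (1 - u)) u := by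
  have : 1 + u ≠ 0 := by linarith [hu.1]
  have : 1 - u ≠ 0 := by linarith [hu.2]
  have : -u - 1 ≠ 0 := by linarith [hu.1]
  have : -1 - -u ≠ 0 := by linarith [hu.2]
  refine (hasDerivAt_pc (hasDerivAt_const u (1 : ℝ)) (hasDerivAt_const u (-1 : ℝ))
    (hasDerivAt_neg u) (by linarith [hu.1]) (by linarith [hu.2])).congr_deriv ?_
  field_simp
  ring

lemma strictMonoOn_tU : StrictMonoOn tU (Ioo (-1) 1) := by
  refine strictMonoOn_of_deriv_pos (convex_Ioo _ _)
    (fun u hu => (hasDerivAt_tU hu).continuousAt.continuousWithinAt) (fun u hu => ?_)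
  rw [interior_Ioo] at hu
  rw [(hasDerivAt_tU hu).deriv]
  have : 0 < 1 + u := by linarith [hu.1]
  have : 0 < 1 - u := by linarith [hu.2]
  positivity

lemma hasDerivAt_gU (hα : 1 ≤ α) (hu : 0 < u) (hv : v3 α u < 1) (hw : 1 - u < w4 α u) :
    HasDerivAt (gU α) (dgU α u) u := by
  refine (hasDerivAt_pc (hasDerivAt_neg u) (hasDerivAt_id u) ((hasDerivAt_w4 hα u).const_sub 1)
    (by linarith [w4_lt (by linarith) hu hv]) (by simp only [id]; linarith)).congr_deriv ?_
  rw [dgU, id, show 1 - w4 α u - -u = 1 + u - w4 α u by ring,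
    show u - (1 - w4 α u) = w4 α u - (1 - u) by ring]
  ring

/-- The admissible values of `u` form an interval: going left from an admissible value, `u + w4 α u`
could only drop to `1` by crossing it upwards, which `dw4_lt_neg_one` forbids. -/
lemma AdmU.of_mem_Icc {u₁ u₂ : ℝ} (hα : 1 < α) (h₁ : AdmU α u₁) (h₂ : AdmU α u₂)
    (hu : u ∈ Icc u₁ u₂) : AdmU α u := by
  have hv : ∀ y ∈ Icc u₁ u₂, v3 α y < 1 := fun y hy =>
    ((v3_strictMonoOn (by linarith)).monotoneOn (mem_Ici.2 (h₁.1.trans_le hy.1).le)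
      (mem_Ici.2 h₂.1.le) hy.2).trans_lt h₂.2.2.1
  refine ⟨h₁.1.trans_le hu.1, hu.2.trans_lt h₂.2.1, hv u hu, ?_⟩
  have hcross := lt_of_lt_of_downward_crossings (φ := fun y => w4 α y + y) (k := 1) hu.2
    ((continuous_w4 hα.le).add continuous_id).continuousOn (fun y hy hy1 => ?_)
    (by linarith [h₂.2.2.2])
  · linarith
  have hy : y ∈ Icc u₁ u₂ := ⟨hu.1.trans hy.1, hy.2.le⟩
  have hdw := dw4_lt_neg_one hα (h₁.1.trans_le hy.1) (hy.2.trans_lt h₂.2.1) (hv y hy)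
    (by linarith)
  filter_upwards [((hasDerivAt_w4 hα.le y).add (hasDerivAt_id y)).eventually_nhdsGT_lt
    (by linarith)] with z hz
  simp only [Pi.add_apply, id] at hz
  linarith

lemma gU_sub_tU_lt {u₁ u₂ : ℝ} (hα : 1 < α) (h₁ : AdmU α u₁) (h₂ : AdmU α u₂) (h : u₁ < u₂) :
    gU α u₁ - tU u₁ < gU α u₂ - tU u₂ := by
  have hd : ∀ u ∈ Icc u₁ u₂,
      HasDerivAt (fun u => gU α u - tU u) (dgU α u - (1 / (1 + u) + 1 / (1 - u))) u := by
    intro u hu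
    obtain ⟨hu0, hu1, hv, hw⟩ := h₁.of_mem_Icc hα h₂ hu
    exact (hasDerivAt_gU hα.le hu0 hv hw).sub (hasDerivAt_tU ⟨by linarith, hu1⟩)
  refine strictMonoOn_of_deriv_pos (convex_Icc u₁ u₂)
    (fun u hu => (hd u hu).continuousAt.continuousWithinAt) (fun u hu => ?_)
    (left_mem_Icc.2 h.le) (right_mem_Icc.2 h.le) h
  obtain ⟨hu0, hu1, hv, hw⟩ := h₁.of_mem_Icc hα h₂ (interior_subset hu)
  rw [(hd u (interior_subset hu)).deriv]
  exact sub_pos.2 (deriv_tU_lt_deriv_gU hα hu0 hu1 hv hw)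

lemma sub_tU_lt_sub_gU {u₁ u₂ : ℝ} (hα : 1 < α) (h₁ : AdmU α u₁) (h₂ : AdmU α u₂)
    (ht : tU u₁ < tU u₂) : tU u₂ - tU u₁ < gU α u₂ - gU α u₁ := by
  have h := (strictMonoOn_tU.lt_iff_lt ⟨by linarith [h₁.1], h₁.2.1⟩
    ⟨by linarith [h₂.1], h₂.2.1⟩).1 ht
  linarith [gU_sub_tU_lt hα h₁ h₂ h]

lemma exists_admU_w4_eq_one (hα : 1 < α) : ∃ u, AdmU α u ∧ w4 α u = 1 := by
  have hv0 : v3 α 0 = 0 := by simp [v3, zero_rpow (by linarith : α ≠ 0)]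
  have hw0 : w4 α 0 = 1 := by simp [w4, hv0]
  have hdw0 : dw4 α 0 = 1 := by
    simp [dw4, dv3, hv0, zero_rpow (by linarith : α ≠ 0), zero_rpow (by linarith : α - 1 ≠ 0)]
  obtain ⟨u', ⟨hu'0, hu'1⟩, hv'⟩ : ∃ u' ∈ Ioo (0 : ℝ) 1, v3 α u' = 1 :=
    intermediate_value_Ioo zero_le_one (continuous_v3 hα.le).continuousOn
      (by rw [hv0]; norm_num [v3])
  have hw' : w4 α u' = 0 := by simp [w4, hv', zero_rpow (by linarith : α ≠ 0)]
  have hgt : ∀ᶠ z in 𝓝[>] (0 : ℝ), -w4 α z < -w4 α 0 :=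
    (hasDerivAt_w4 hα.le 0).neg.eventually_nhdsGT_lt (by linarith)
  obtain ⟨ε, hε, hε0, hεu'⟩ := (hgt.and (Ioo_mem_nhdsGT hu'0)).exists
  obtain ⟨u, ⟨hεu, huu'⟩, hu⟩ := intermediate_value_Ioo' hεu'.le
    (continuous_w4 hα.le).continuousOn (show (1 : ℝ) ∈ Ioo (w4 α u') (w4 α ε) by
      constructor <;> linarith)
  refine ⟨u, ⟨hε0.trans hεu, huu'.trans hu'1, ?_, by linarith⟩, hu⟩
  rw [← hv']
  exact v3_strictMonoOn (by linarith) (mem_Ici.2 (hε0.trans hεu).le) (mem_Ici.2 hu'0.le) huu'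

end Orbit

section Parameter

variable {α a u : ℝ}

lemma orb_zero : orb α a 0 = 0 := by simp [orb]

lemma orb_succ (ha : 0 < a) (n : ℕ) : orb α a (n + 1) = 1 - a ^ (α - 1) * |orb α a n| ^ α := by
  rw [orb, orb, Function.iterate_succ_apply', f, abs_div, abs_of_pos ha,
    div_rpow (abs_nonneg _) ha.le, rpow_sub_one ha.ne']
  field_simp
  ring

lemma orb_two (hα : α ≠ 0) (ha : 0 < a) (hu : a ^ (α - 1) = 1 + u) : orb α a 2 = -u := by
  rw [orb_succ ha, orb_succ ha, orb_zero, abs_zero, zero_rpow hα, hu]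
  simp

lemma orb_three (hα : α ≠ 0) (ha : 0 < a) (hu : a ^ (α - 1) = 1 + u) (hu0 : 0 ≤ u) :
    orb α a 3 = 1 - v3 α u := by
  rw [orb_succ ha, orb_two hα ha hu, abs_neg, abs_of_nonneg hu0, hu, v3]

lemma orb_four (hα : α ≠ 0) (ha : 0 < a) (hu : a ^ (α - 1) = 1 + u) (hu0 : 0 ≤ u)
    (hv : v3 α u ≤ 1) : orb α a 4 = 1 - w4 α u := by
  rw [orb_succ ha, orb_three hα ha hu hu0, abs_of_nonneg (sub_nonneg.2 hv), hu, w4]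

lemma adm_iff_admU (hα : 1 < α) (ha : 0 < a) (hu : a ^ (α - 1) = 1 + u) :
    Adm α a ↔ AdmU α u := by
  have hα0 : α ≠ 0 := by linarith
  constructor
  · rintro ⟨-, ⟨h2l, h2r⟩, ⟨h3l, -⟩, ⟨-, h4r⟩⟩
    rw [orb_two hα0 ha hu] at h2l h2r h4r
    have hu0 : 0 < u := by linarith
    rw [orb_three hα0 ha hu hu0.le] at h3l
    rw [orb_four hα0 ha hu hu0.le (by linarith)] at h4r
    exact ⟨hu0, by linarith, by linarith, by linarith⟩
  · rintro ⟨hu0, hu1, hv, hw⟩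
    have ha1 : 1 < a := by
      by_contra! h
      linarith [rpow_le_one ha.le h (by linarith : 0 ≤ α - 1)]
    rw [Adm, orb_two hα0 ha hu, orb_three hα0 ha hu hu0.le, orb_four hα0 ha hu hu0.le hv.le,
      neg_neg]
    exact ⟨ha1, ⟨by linarith, by linarith⟩, ⟨by linarith, by linarith [v3_pos (α := α) hu0]⟩,
      ⟨by linarith [w4_lt (by linarith) hu0 hv], by linarith⟩⟩

lemma tcoord_eq_tU (hα : α ≠ 0) (ha : 0 < a) (hu : a ^ (α - 1) = 1 + u) : tcoord α a = tU u := by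
  rw [tcoord, orb_two hα ha hu, tU]

lemma g_eq_gU (hα : α ≠ 0) (ha : 0 < a) (hu : a ^ (α - 1) = 1 + u) (hu0 : 0 ≤ u)
    (hv : v3 α u ≤ 1) : g α a = gU α u := by
  rw [g, orb_two hα ha hu, orb_four hα ha hu hu0 hv, neg_neg, gU]

lemma Adm.admU (hα : 1 < α) (hA : Adm α a) : AdmU α (a ^ (α - 1) - 1) :=
  (adm_iff_admU hα (zero_lt_one.trans hA.1) (by ring)).1 hA

lemma Adm.tcoord_eq (hα : 1 < α) (hA : Adm α a) : tcoord α a = tU (a ^ (α - 1) - 1) :=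
  tcoord_eq_tU (by linarith) (zero_lt_one.trans hA.1) (by ring)

lemma Adm.g_eq (hα : 1 < α) (hA : Adm α a) : g α a = gU α (a ^ (α - 1) - 1) :=
  g_eq_gU (by linarith) (zero_lt_one.trans hA.1) (by ring) (hA.admU hα).1.le (hA.admU hα).2.2.1.le

lemma AdmU.exists_adm (hα : 1 < α) (h : AdmU α u) : ∃ a, Adm α a ∧ g α a = gU α u := by
  have ha : 0 < (1 + u) ^ (α - 1)⁻¹ := rpow_pos_of_pos (by linarith [h.1]) _
  have hu : ((1 + u) ^ (α - 1)⁻¹) ^ (α - 1) = 1 + u :=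
    rpow_inv_rpow (by linarith [h.1]) (by linarith)
  exact ⟨_, (adm_iff_admU hα ha hu).2 h, g_eq_gU (by linarith) ha hu h.1.le h.2.2.1.le⟩

lemma tcoord_strictMonoOn (hα : 1 < α) : StrictMonoOn (tcoord α) {a | Adm α a} := by
  intro a hA b hB hab
  have hA' := hA.admU hα
  have hB' := hB.admU hα
  rw [hA.tcoord_eq hα, hB.tcoord_eq hα]
  refine strictMonoOn_tU ⟨by linarith [hA'.1], hA'.2.1⟩ ⟨by linarith [hB'.1], hB'.2.1⟩ ?_
  linarith [rpow_lt_rpow (zero_lt_one.trans hA.1).le hab (by linarith : 0 < α - 1)]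

end Parameter

/-- Theorem 3.1: the position of `4_a` in `(2_a,-2_a)`, in Poincaré coordinates,
is a strictly increasing function of `t = p_{1,-1}(2_a)` with slope `> 1`;
in particular the super-stable kneading sequence `RLRC`, i.e. `g = 0`, occurs for
exactly one parameter. -/
theorem stmt15 (α : ℝ) (hα : 1 < α) :
    (∀ a a' : ℝ, Adm α a → Adm α a' → tcoord α a < tcoord α a' →
      g α a' - g α a > tcoord α a' - tcoord α a)
    ∧ ∃! a : ℝ, Adm α a ∧ g α a = 0 := by
  have hslope : ∀ a a' : ℝ, Adm α a → Adm α a' → tcoord α a < tcoord α a' →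
      g α a' - g α a > tcoord α a' - tcoord α a := by
    intro a a' hA hA' ht
    rw [hA.tcoord_eq hα, hA'.tcoord_eq hα] at ht ⊢
    rw [hA.g_eq hα, hA'.g_eq hα]
    exact sub_tU_lt_sub_gU hα (hA.admU hα) (hA'.admU hα) ht
  refine ⟨hslope, ?_⟩
  obtain ⟨u, hu, hw⟩ := exists_admU_w4_eq_one hα
  obtain ⟨a, hA, hg⟩ := hu.exists_adm hα
  have hg0 : g α a = 0 := by
    rw [hg, gU, hw, pc, sub_self, zero_sub, neg_neg, sub_zero, div_self hu.1.ne', log_one]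
  refine ⟨a, ⟨hA, hg0⟩, fun b ⟨hB, hgb⟩ => ?_⟩
  by_contra hba
  rcases lt_or_gt_of_ne hba with h | h
  · have ht := tcoord_strictMonoOn hα hB hA h
    linarith [hslope b a hB hA ht]
  · have ht := tcoord_strictMonoOn hα hA hB h
    linarith [hslope a b hA hB ht]
end
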